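/- arXiv:2504.19259 — 3 statements merged into one kernel-verified Lean document; each statement's English description precedes it below -/
import Mathlib

section
/- Let q, p₀ ∈ S_n with p₀ ≠ q, and let θ : [0, ∞) → ℝⁿ be differentiable with θ(0) = θ_{p₀} and θ'(t) = −∇L_q(θ(t)) for all t ≥ 0, where L_q is the loss in θ coordinates. Then there exist constants 0 < m ≤ L < 1 and c > 0 such that c·e^{−2t} ≤ c·e^{−2Lt} ≤ L_q(θ(t)) ≤ c·e^{−2mt} for all t ≥ 0; i.e., L_q(θ(t)) converges to zero exponentially with rate lower than 2. -/
open Filter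

noncomputable section

abbrev E (n : ℕ) := EuclideanSpace ℝ (Fin n)

/-- The open probability simplex `S_n` inside `ℝ^{n+1}`. -/
def simplex (n : ℕ) : Set (Fin (n+1) → ℝ) :=
  {p | (∀ i, 0 < p i) ∧ ∑ i, p i = 1}

/-- The mixture (`η`) coordinate domain `Δ_n`. -/
def Δset (n : ℕ) : Set (E n) := {η | (∀ i, 0 < η i) ∧ ∑ i, η i < 1}

/-- The distribution in `S_n` corresponding to `η` coordinates. -/
def mixDist {n : ℕ} (η : E n) : Fin (n+1) → ℝ :=
  Fin.snoc (fun i => η i) (1 - ∑ i, η i)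

/-- The distribution in `S_n` corresponding to `θ` coordinates. -/
def expDist {n : ℕ} (θ : E n) : Fin (n+1) → ℝ :=
  Fin.snoc (fun i => Real.exp (θ i) / (1 + ∑ j, Real.exp (θ j)))
    (1 / (1 + ∑ j, Real.exp (θ j)))

/-- The `η` coordinates of a distribution `q ∈ S_n`. -/
def etaCoord {n : ℕ} (q : Fin (n+1) → ℝ) : E n := WithLp.toLp 2 (fun i : Fin n => q i.castSucc)

/-- The `θ` coordinates of a distribution `q ∈ S_n`. -/
def thetaCoord {n : ℕ} (q : Fin (n+1) → ℝ) : E n :=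
  WithLp.toLp 2 (fun i : Fin n => Real.log (q i.castSucc / q (Fin.last n)))

/-- Kullback–Leibler divergence `D(q‖p)`. -/
def KL {n : ℕ} (q p : Fin (n+1) → ℝ) : ℝ := ∑ i, q i * Real.log (q i / p i)

/-- Log-partition function `ψ(θ) = log(1 + Σ e^{θ_i})`. -/
def psi {n : ℕ} (θ : E n) : ℝ := Real.log (1 + ∑ i, Real.exp (θ i))

/-- Negative entropy `φ(η)`. -/
def phi {n : ℕ} (η : E n) : ℝ :=
  (∑ i, η i * Real.log (η i)) + (1 - ∑ i, η i) * Real.log (1 - ∑ i, η i)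

/-- The loss `L_q` in `η` coordinates: `η ↦ D(q ‖ p(η))`. -/
def Leta {n : ℕ} (q : Fin (n+1) → ℝ) (η : E n) : ℝ := KL q (mixDist η)

/-- The loss `L_q` in `θ` coordinates: `θ ↦ D(q ‖ p(θ))`. -/
def Ltheta {n : ℕ} (q : Fin (n+1) → ℝ) (θ : E n) : ℝ := KL q (expDist θ)

/-- The Hessian of `f : ℝⁿ → ℝ` at `x`, as the `n × n` matrix of second partial
derivatives. -/
def hess {n : ℕ} (f : E n → ℝ) (x : E n) : Matrix (Fin n) (Fin n) ℝ :=
  Matrix.of fun i j =>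
    fderiv ℝ (fun y => fderiv ℝ f y (EuclideanSpace.single j 1)) x (EuclideanSpace.single i 1)

/-- The set of (real) eigenvalues of a matrix. -/
def lamSet {n : ℕ} (A : Matrix (Fin n) (Fin n) ℝ) : Set ℝ :=
  {μ | ∃ v : Fin n → ℝ, v ≠ 0 ∧ A.mulVec v = μ • v}

/-- Largest eigenvalue `λ_max`. -/
def lamMax {n : ℕ} (A : Matrix (Fin n) (Fin n) ℝ) : ℝ := sSup (lamSet A)

/-- Smallest eigenvalue `λ_min`. -/
def lamMin {n : ℕ} (A : Matrix (Fin n) (Fin n) ℝ) : ℝ := sInf (lamSet A)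

/-- Condition number `cond(A) = λ_max(A)/λ_min(A)`. -/
def condNum {n : ℕ} (A : Matrix (Fin n) (Fin n) ℝ) : ℝ := lamMax A / lamMin A

/-- Operator 2-norm of a matrix (induced by the Euclidean norm). -/
def opNorm {n : ℕ} (A : Matrix (Fin n) (Fin n) ℝ) : ℝ :=
  ‖Matrix.toEuclideanCLM (𝕜 := ℝ) A‖

/-! Along the flow, `t ↦ L_q(θ t)` has derivative `-‖∇L_q(θ t)‖²`, so the loss decreases and
the trajectory stays in a KL ball around `q`; on such a ball every coordinate of `p(θ t)` is at
least some `δ > 0`. There the termwise bounds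
`(q - p)² / (2 max(p, q)) ≤ q log(q/p) + p - q ≤ (q - p)² / p`, together with
`max(p_i, q_i) ≤ 1 - δ` for `i ≤ n` and Cauchy–Schwarz for the last coordinate, give
`δ/(n+1) · L_q ≤ ‖∇L_q‖² ≤ 2(1 - δ) · L_q`, and Grönwall's inequality turns these into the two
exponential bounds. -/

open Real Set

/-- The summands of `KL` on the simplex, shifted by `p - q` so that each is nonnegative. -/
def klTerm (q p : ℝ) : ℝ := q * log (q / p) + p - q

lemma klTerm_nonneg {q p : ℝ} (hq : 0 < q) (hp : 0 < p) : 0 ≤ klTerm q p := by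
  have h := mul_le_mul_of_nonneg_left (one_sub_inv_le_log_of_pos (div_pos hq hp)) hq.le
  rw [inv_div, mul_sub, mul_one, mul_div_cancel₀ _ hq.ne'] at h
  rw [klTerm]
  linarith

lemma klTerm_le_sq_sub_div {q p : ℝ} (hq : 0 < q) (hp : 0 < p) :
    klTerm q p ≤ (q - p) ^ 2 / p := by
  have h := mul_le_mul_of_nonneg_left (log_le_sub_one_of_pos (div_pos hq hp)) hq.le
  have hsq : q * (q / p - 1) + p - q = (q - p) ^ 2 / p := by field_simp; ring
  rw [klTerm]
  linarith

lemma sq_sub_le_two_mul_max_mul_klTerm {q p : ℝ} (hq : 0 < q) (hp : 0 < p) :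
    (q - p) ^ 2 ≤ 2 * max p q * klTerm q p := by
  rw [klTerm]
  rcases le_total p q with hpq | hqp
  · have hlog : 2 * ((q - p) / p) / ((q - p) / p + 2) ≤ log (q / p) := by
      have h := le_log_one_add_of_nonneg (div_nonneg (sub_nonneg.2 hpq) hp.le)
      rwa [one_add_div hp.ne', add_sub_cancel] at h
    calc (q - p) ^ 2 ≤ 2 * q * (q - p) ^ 2 / (q + p) := by
          rw [le_div_iff₀ (by positivity)]; nlinarith [sq_nonneg (q - p)]
      _ = 2 * q * (q * (2 * ((q - p) / p) / ((q - p) / p + 2)) + p - q) := by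
          field_simp; ring
      _ ≤ 2 * max p q * (q * log (q / p) + p - q) := by
          rw [max_eq_right hpq]; gcongr
  · have hlog : log (p / q) ≤ (p / q - (p / q)⁻¹) / 2 := by
      rw [← sinh_log (by positivity), self_le_sinh_iff]
      exact log_nonneg ((one_le_div hq).2 hqp)
    calc (q - p) ^ 2 = 2 * p * (q * -((p / q - (p / q)⁻¹) / 2) + p - q) := by
          field_simp; ring
      _ ≤ 2 * max p q * (q * log (q / p) + p - q) := by
          rw [max_eq_left hqp, ← inv_div p q, log_inv]; gcongr

section KL

variable {n : ℕ} {q p : Fin (n+1) → ℝ}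

lemma simplex_le_one (hp : p ∈ simplex n) (i : Fin (n+1)) : p i ≤ 1 :=
  hp.2 ▸ Finset.single_le_sum (fun j _ => (hp.1 j).le) (Finset.mem_univ i)

lemma simplex_add_le_one (hp : p ∈ simplex n) {i j : Fin (n+1)} (hij : i ≠ j) :
    p i + p j ≤ 1 := by
  rw [← Finset.sum_pair hij, ← hp.2]
  exact Finset.sum_le_sum_of_subset_of_nonneg (Finset.subset_univ _) fun k _ _ => (hp.1 k).le

lemma KL_eq_sum_klTerm (hq : q ∈ simplex n) (hp : p ∈ simplex n) :
    KL q p = ∑ i, klTerm (q i) (p i) := by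
  simp only [klTerm]
  rw [Finset.sum_sub_distrib, Finset.sum_add_distrib, hq.2, hp.2, add_sub_cancel_right, KL]

lemma KL_nonneg (hq : q ∈ simplex n) (hp : p ∈ simplex n) : 0 ≤ KL q p :=
  KL_eq_sum_klTerm hq hp ▸ Finset.sum_nonneg fun i _ => klTerm_nonneg (hq.1 i) (hp.1 i)

lemma KL_pos (hq : q ∈ simplex n) (hp : p ∈ simplex n) (hne : p ≠ q) : 0 < KL q p := by
  obtain ⟨i, hi⟩ := Function.ne_iff.1 hne
  rw [KL_eq_sum_klTerm hq hp]
  refine Finset.sum_pos' (fun j _ => klTerm_nonneg (hq.1 j) (hp.1 j)) ⟨i, Finset.mem_univ i, ?_⟩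
  have hsq : 0 < (q i - p i) ^ 2 := by positivity [sub_ne_zero.2 hi.symm]
  have hmax : 0 ≤ 2 * max (p i) (q i) := by positivity [hp.1 i]
  exact pos_of_mul_pos_right (hsq.trans_le (sq_sub_le_two_mul_max_mul_klTerm (hq.1 i) (hp.1 i)))
    hmax

lemma KL_le_sum_sq_div (hq : q ∈ simplex n) (hp : p ∈ simplex n) :
    KL q p ≤ ∑ i, (q i - p i) ^ 2 / p i :=
  KL_eq_sum_klTerm hq hp ▸ Finset.sum_le_sum fun i _ => klTerm_le_sq_sub_div (hq.1 i) (hp.1 i)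

lemma sum_sq_le_two_mul_one_sub_mul_KL {δ : ℝ} (hq : q ∈ simplex n) (hp : p ∈ simplex n)
    (hδq : δ ≤ q (Fin.last n)) (hδp : δ ≤ p (Fin.last n)) :
    ∑ i : Fin n, (p i.castSucc - q i.castSucc) ^ 2 ≤ 2 * (1 - δ) * KL q p := by
  have hδ : 0 ≤ 1 - δ := by linarith [simplex_le_one hq (Fin.last n)]
  rw [KL_eq_sum_klTerm hq hp, Fin.sum_univ_castSucc, mul_add, Finset.mul_sum]
  refine le_add_of_le_of_nonneg (Finset.sum_le_sum fun i _ => ?_)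
    (mul_nonneg (by positivity) (klTerm_nonneg (hq.1 _) (hp.1 _)))
  have hne : i.castSucc ≠ Fin.last n := (Fin.castSucc_lt_last i).ne
  have hmax : max (p i.castSucc) (q i.castSucc) ≤ 1 - δ := max_le
    (by linarith [simplex_add_le_one hp hne]) (by linarith [simplex_add_le_one hq hne])
  calc (p i.castSucc - q i.castSucc) ^ 2 = (q i.castSucc - p i.castSucc) ^ 2 := by ring
    _ ≤ 2 * max (p i.castSucc) (q i.castSucc) * klTerm (q i.castSucc) (p i.castSucc) :=
        sq_sub_le_two_mul_max_mul_klTerm (hq.1 _) (hp.1 _)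
    _ ≤ 2 * (1 - δ) * klTerm (q i.castSucc) (p i.castSucc) := by
        gcongr; exact klTerm_nonneg (hq.1 _) (hp.1 _)

lemma mul_KL_le_mul_sum_sq {δ : ℝ} (hq : q ∈ simplex n) (hp : p ∈ simplex n) (hδ : 0 < δ)
    (hδp : ∀ i, δ ≤ p i) :
    δ * KL q p ≤ (n + 1) * ∑ i : Fin n, (p i.castSucc - q i.castSucc) ^ 2 := by
  set S := ∑ i : Fin n, (p i.castSucc - q i.castSucc) ^ 2
  have hlast : q (Fin.last n) - p (Fin.last n) = ∑ i : Fin n, (p i.castSucc - q i.castSucc) := by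
    have hq2 := hq.2
    have hp2 := hp.2
    rw [Fin.sum_univ_castSucc] at hq2 hp2
    rw [Finset.sum_sub_distrib]
    linarith
  have hlast_sq : (q (Fin.last n) - p (Fin.last n)) ^ 2 ≤ n * S := by
    simpa [hlast] using sq_sum_le_card_mul_sum_sq (s := Finset.univ)
      (f := fun i : Fin n => p i.castSucc - q i.castSucc)
  calc δ * KL q p ≤ δ * ∑ i, (q i - p i) ^ 2 / p i := by gcongr; exact KL_le_sum_sq_div hq hp
    _ ≤ δ * ∑ i, (q i - p i) ^ 2 / δ := by gcongr with i; exacts [hδp i]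
    _ = ∑ i, (q i - p i) ^ 2 := by rw [← Finset.sum_div, mul_div_cancel₀ _ hδ.ne']
    _ = S + (q (Fin.last n) - p (Fin.last n)) ^ 2 := by
        rw [Fin.sum_univ_castSucc]; congr 1; exact Finset.sum_congr rfl fun i _ => by ring
    _ ≤ (n + 1) * S := by linarith

lemma mul_exp_le_of_KL_le {C : ℝ} (hq : q ∈ simplex n) (hp : p ∈ simplex n)
    (hC : KL q p ≤ C) (i : Fin (n+1)) : q i * exp (-(C + 1) / q i) ≤ p i := by
  have hqi := hq.1 i
  have hpi := hp.1 i
  have hterm : klTerm (q i) (p i) ≤ KL q p := by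
    rw [KL_eq_sum_klTerm hq hp]
    exact Finset.single_le_sum (f := fun j => klTerm (q j) (p j))
      (fun j _ => klTerm_nonneg (hq.1 j) (hp.1 j)) (Finset.mem_univ i)
  have hlog : log (q i / p i) ≤ (C + 1) / q i := by
    rw [klTerm] at hterm
    rw [le_div_iff₀ hqi]
    nlinarith [simplex_le_one hq i]
  rw [neg_div, exp_neg, ← div_eq_mul_inv, div_le_iff₀ (exp_pos _), ← div_le_iff₀' hpi]
  exact (log_le_iff_le_exp (div_pos hqi hpi)).1 hlog

lemma exists_forall_le_of_KL_le {C : ℝ} (hq : q ∈ simplex n) (hC : 0 ≤ C) :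
    ∃ δ > 0, (∀ i, δ < q i) ∧ ∀ p ∈ simplex n, KL q p ≤ C → ∀ i, δ ≤ p i := by
  set δ := Finset.univ.inf' Finset.univ_nonempty fun i => q i * exp (-(C + 1) / q i)
  have hδ_le : ∀ i, δ ≤ q i * exp (-(C + 1) / q i) := fun i =>
    Finset.inf'_le _ (Finset.mem_univ i)
  refine ⟨δ, (Finset.lt_inf'_iff _).2 fun i _ => by have := hq.1 i; positivity,
    fun i => (hδ_le i).trans_lt ?_,
    fun p hp hKL i => (hδ_le i).trans (mul_exp_le_of_KL_le hq hp hKL i)⟩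
  have hqi := hq.1 i
  exact mul_lt_of_lt_one_right hqi (exp_lt_one_iff.2 (div_neg_of_neg_of_pos (by linarith) hqi))

end KL

section ThetaCoordinates

variable {n : ℕ}

lemma expDist_mem (θ : E n) : expDist θ ∈ simplex n := by
  refine ⟨fun i => ?_, ?_⟩
  · cases i using Fin.lastCases <;> simp only [expDist, Fin.snoc_last, Fin.snoc_castSucc] <;>
      positivity
  · have hZ : (1 + ∑ j, exp (θ j)) ≠ 0 := by positivity
    rw [Fin.sum_univ_castSucc]
    simp only [expDist, Fin.snoc_castSucc, Fin.snoc_last]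
    rw [← Finset.sum_div]; field_simp; ring

lemma log_expDist_castSucc (θ : E n) (i : Fin n) :
    log (expDist θ i.castSucc) = θ i - psi θ := by
  rw [expDist, Fin.snoc_castSucc, log_div (exp_ne_zero _) (by positivity), log_exp, psi]

lemma log_expDist_last (θ : E n) : log (expDist θ (Fin.last n)) = -psi θ := by
  rw [expDist, Fin.snoc_last, one_div, log_inv, psi]

lemma expDist_thetaCoord {p : Fin (n+1) → ℝ} (hp : p ∈ simplex n) :
    expDist (thetaCoord p) = p := by
  have hlast := hp.1 (Fin.last n)
  have hexp : ∀ i : Fin n, exp (thetaCoord p i) = p i.castSucc / p (Fin.last n) := fun i => by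
    rw [thetaCoord, exp_log (div_pos (hp.1 _) hlast)]
  have hZ : 1 + ∑ j : Fin n, exp (thetaCoord p j) = 1 / p (Fin.last n) := by
    have hsum := hp.2
    rw [Fin.sum_univ_castSucc] at hsum
    simp only [hexp]
    rw [← Finset.sum_div, eq_sub_of_add_eq hsum]
    field_simp; ring
  funext i
  refine Fin.lastCases ?_ (fun i => ?_) i
  · simp only [expDist, Fin.snoc_last, hZ]; field_simp
  · rw [expDist, Fin.snoc_castSucc, hZ, hexp]; field_simp

lemma Ltheta_eq {q : Fin (n+1) → ℝ} (hq : q ∈ simplex n) (θ : E n) :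
    Ltheta q θ = (∑ i, q i * log (q i)) - (∑ i : Fin n, q i.castSucc * θ i) + psi θ := by
  have hsum := hq.2
  rw [Fin.sum_univ_castSucc] at hsum
  have hterm : ∀ i, q i * log (q i / expDist θ i) = q i * log (q i) - q i * log (expDist θ i) :=
    fun i => by rw [log_div (hq.1 i).ne' ((expDist_mem θ).1 i).ne']; ring
  simp only [Ltheta, KL, hterm, Finset.sum_sub_distrib, Fin.sum_univ_castSucc (n := n),
    log_expDist_castSucc, log_expDist_last, mul_sub, Finset.sum_sub_distrib, ← Finset.sum_mul]
  rw [eq_sub_of_add_eq hsum]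
  ring

end ThetaCoordinates

section Gradient

variable {n : ℕ}

lemma toDual_toLp (c : Fin n → ℝ) :
    InnerProductSpace.toDual ℝ (E n) (WithLp.toLp 2 c) = ∑ j, c j • EuclideanSpace.proj j := by
  ext v
  simp [PiLp.inner_apply, mul_comm]

lemma hasFDerivAt_psi (θ : E n) :
    HasFDerivAt psi (∑ j : Fin n, expDist θ j.castSucc • EuclideanSpace.proj (𝕜 := ℝ) j) θ := by
  have hsum : HasFDerivAt (fun x : E n => 1 + ∑ j, exp (x j))
      (∑ j, exp (θ j) • EuclideanSpace.proj (𝕜 := ℝ) j) θ :=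
    (HasFDerivAt.fun_sum fun j _ => (EuclideanSpace.proj (𝕜 := ℝ) j).hasFDerivAt.exp).const_add 1
  refine (hsum.log (by positivity)).congr_fderiv ?_
  simp only [Finset.smul_sum, smul_smul, expDist, Fin.snoc_castSucc, div_eq_inv_mul]

lemma hasGradientAt_Ltheta {q : Fin (n+1) → ℝ} (hq : q ∈ simplex n) (θ : E n) :
    HasGradientAt (Ltheta q) (WithLp.toLp 2 fun i => expDist θ i.castSucc - q i.castSucc) θ := by
  have hlin : HasFDerivAt (fun x : E n => ∑ i : Fin n, q i.castSucc * x i)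
      (∑ i : Fin n, q i.castSucc • EuclideanSpace.proj (𝕜 := ℝ) i) θ :=
    HasFDerivAt.fun_sum fun i _ => (EuclideanSpace.proj (𝕜 := ℝ) i).hasFDerivAt.const_mul _
  rw [hasGradientAt_iff_hasFDerivAt, toDual_toLp, funext (Ltheta_eq hq)]
  refine (((hasFDerivAt_const _ θ).sub hlin).add (hasFDerivAt_psi θ)).congr_fderiv ?_
  simp only [sub_smul, Finset.sum_sub_distrib, zero_sub]
  abel

lemma norm_gradient_Ltheta_sq {q : Fin (n+1) → ℝ} (hq : q ∈ simplex n) (θ : E n) :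
    ‖gradient (Ltheta q) θ‖ ^ 2 = ∑ i : Fin n, (expDist θ i.castSucc - q i.castSucc) ^ 2 := by
  simp [(hasGradientAt_Ltheta hq θ).gradient, EuclideanSpace.real_norm_sq_eq]

lemma norm_gradient_Ltheta_sq_le {q : Fin (n+1) → ℝ} {δ : ℝ} (hq : q ∈ simplex n) {θ : E n}
    (hδq : δ ≤ q (Fin.last n)) (hδθ : δ ≤ expDist θ (Fin.last n)) :
    ‖gradient (Ltheta q) θ‖ ^ 2 ≤ 2 * (1 - δ) * Ltheta q θ := by
  rw [norm_gradient_Ltheta_sq hq]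
  exact sum_sq_le_two_mul_one_sub_mul_KL hq (expDist_mem θ) hδq hδθ

lemma mul_Ltheta_le_norm_gradient_sq {q : Fin (n+1) → ℝ} {δ : ℝ} (hq : q ∈ simplex n) {θ : E n}
    (hδ : 0 < δ) (hδθ : ∀ i, δ ≤ expDist θ i) :
    δ / (n + 1) * Ltheta q θ ≤ ‖gradient (Ltheta q) θ‖ ^ 2 := by
  have h := mul_KL_le_mul_sum_sq hq (expDist_mem θ) hδ hδθ
  rw [norm_gradient_Ltheta_sq hq, div_mul_eq_mul_div, div_le_iff₀ (by positivity), Ltheta]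
  linarith

end Gradient

lemma DifferentiableAt.hasDerivAt_comp_neg_gradient {H : Type*} [NormedAddCommGroup H]
    [InnerProductSpace ℝ H] [CompleteSpace H] {F : H → ℝ} {γ : ℝ → H} {t : ℝ}
    (hF : DifferentiableAt ℝ F (γ t))
    (hγ : HasDerivAt γ (-gradient F (γ t)) t) :
    HasDerivAt (F ∘ γ) (-‖gradient F (γ t)‖ ^ 2) t := by
  have h := hF.hasGradientAt.hasFDerivAt.comp_hasDerivAt t hγ
  rwa [InnerProductSpace.toDual_apply_apply, inner_neg_right, real_inner_self_eq_norm_sq] at h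

lemma le_mul_exp_of_hasDerivAt_le {f f' : ℝ → ℝ} {k : ℝ}
    (hf : ∀ t ≥ 0, HasDerivAt f (f' t) t) (hf' : ∀ t ≥ 0, f' t ≤ k * f t) {t : ℝ} (ht : 0 ≤ t) :
    f t ≤ f 0 * exp (k * t) := by
  have hg : ∀ s ≥ 0, HasDerivAt (fun s => f s * exp (-k * s))
      (f' s * exp (-k * s) + f s * (-k * exp (-k * s))) s := fun s hs =>
    (hf s hs).mul (by simpa [mul_comm] using ((hasDerivAt_id s).const_mul (-k)).exp)
  have hanti : AntitoneOn (fun s => f s * exp (-k * s)) (Ici 0) := by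
    refine antitoneOn_of_hasDerivWithinAt_nonpos (convex_Ici 0)
      (f' := fun s => f' s * exp (-k * s) + f s * (-k * exp (-k * s)))
      (fun s hs => (hg s hs).continuousAt.continuousWithinAt) (fun s hs => ?_) (fun s hs => ?_)
    · rw [interior_Ici] at hs
      exact (hg s hs.le).hasDerivWithinAt
    · rw [interior_Ici] at hs
      nlinarith [hf' s hs.le, exp_pos (-k * s)]
  have h := hanti self_mem_Ici ht ht
  simp only [mul_zero, exp_zero, mul_one] at h
  calc f t = f t * exp (-k * t) * exp (k * t) := by
          rw [mul_assoc, ← exp_add, neg_mul, neg_add_cancel, exp_zero, mul_one]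
    _ ≤ f 0 * exp (k * t) := by gcongr

lemma mul_exp_le_of_le_hasDerivAt {f f' : ℝ → ℝ} {k : ℝ}
    (hf : ∀ t ≥ 0, HasDerivAt f (f' t) t) (hf' : ∀ t ≥ 0, k * f t ≤ f' t) {t : ℝ} (ht : 0 ≤ t) :
    f 0 * exp (k * t) ≤ f t := by
  have h := le_mul_exp_of_hasDerivAt_le (f := -f) (f' := -f') (k := k) (fun s hs => (hf s hs).neg)
    (fun s hs => by simpa using hf' s hs) ht
  simp only [Pi.neg_apply, neg_mul] at h
  linarith

/-- Convergence of the `θ`-gradient flow: exponential rate lower than 2. -/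
theorem stmt_6 {n : ℕ} (q p₀ : Fin (n+1) → ℝ)
    (hq : q ∈ simplex n) (hp₀ : p₀ ∈ simplex n) (hne : p₀ ≠ q)
    (θ : ℝ → E n) (hθ0 : θ 0 = thetaCoord p₀)
    (hode : ∀ t ≥ (0 : ℝ), HasDerivAt θ (-(gradient (Ltheta q) (θ t))) t) :
    ∃ m L c : ℝ, 0 < m ∧ m ≤ L ∧ L < 1 ∧ 0 < c ∧
      ∀ t ≥ (0 : ℝ),
        c * Real.exp (-2 * t) ≤ c * Real.exp (-2 * L * t) ∧
        c * Real.exp (-2 * L * t) ≤ Ltheta q (θ t) ∧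
        Ltheta q (θ t) ≤ c * Real.exp (-2 * m * t) := by
  have hf : ∀ t ≥ 0, HasDerivAt (fun t => Ltheta q (θ t)) (-‖gradient (Ltheta q) (θ t)‖ ^ 2) t :=
    fun t ht =>
      (hasGradientAt_Ltheta hq _).differentiableAt.hasDerivAt_comp_neg_gradient (hode t ht)
  have hc : 0 < Ltheta q (θ 0) := by
    simpa [hθ0, Ltheta, expDist_thetaCoord hp₀] using KL_pos hq hp₀ hne
  have hdecr : ∀ t ≥ 0, Ltheta q (θ t) ≤ Ltheta q (θ 0) := fun t ht => by
    simpa using le_mul_exp_of_hasDerivAt_le (k := 0) hf (fun s _ => by simp) ht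
  obtain ⟨δ, hδ, hδq, hδp⟩ := exists_forall_le_of_KL_le hq hc.le
  have hP : ∀ t ≥ 0, ∀ i, δ ≤ expDist (θ t) i := fun t ht => hδp _ (expDist_mem _) (hdecr t ht)
  have hL : 0 < 1 - δ := by linarith [hδq (Fin.last n), simplex_le_one hq (Fin.last n)]
  set m := min (δ / (n + 1) / 2) (1 - δ)
  have hm : 2 * m ≤ δ / (n + 1) := by linarith [min_le_left (δ / (n + 1) / 2) (1 - δ)]
  refine ⟨m, 1 - δ, _, lt_min (by positivity) hL, min_le_right _ _, by linarith, hc,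
    fun t ht => ⟨by gcongr; nlinarith, mul_exp_le_of_le_hasDerivAt hf (fun s hs => ?_) ht,
      le_mul_exp_of_hasDerivAt_le hf (fun s hs => ?_) ht⟩⟩
  · linarith [norm_gradient_Ltheta_sq_le hq (hδq _).le (hP s hs _)]
  · have h0 : 0 ≤ Ltheta q (θ s) := KL_nonneg hq (expDist_mem _)
    linarith [mul_le_mul_of_nonneg_right hm h0, mul_Ltheta_le_norm_gradient_sq hq hδ (hP s hs)]
end
end

section
/- Let q, p₀ ∈ S_n with p₀ ≠ q, and let η : [0, ∞) → Δ_n be differentiable with η(0) = η_{p₀} and η'(t) = −∇L_q(η(t)) for all t ≥ 0, where L_q is the loss in η coordinates. Then there exist constants 1 < m ≤ L, constants c, c̄ > 0 and a time T ≥ 0 such that c·e^{−2Lt} ≤ L_q(η(t)) ≤ c̄·e^{−2mt} ≤ c̄·e^{−2t} for all t ≥ T; i.e., L_q(η(t)) converges to zero exponentially with rate higher than 2. -/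
open Filter

noncomputable section

/-!
In `η` coordinates the loss is `L_q(η) = -∑ᵢ qᵢ log pᵢ(η) + const` with `p(η)` affine, so its
Hessian dominates `diag(q_j / η_j²)`. Since `η_j < 1` on `Δ_n`, `L_q` is strongly convex with
modulus `min_j q_j`; this gives a Polyak–Łojasiewicz inequality `2 m₀ L_q ≤ ‖∇L_q‖²` and, along
the flow (where `d/dt L_q = -‖∇L_q‖²`), exponential decay of `L_q`. Near the minimiser `η_q` the
modulus is close to `min_j 1/q_j > 1`, while `‖∇L_q‖² ≤ 2 L · L_q` there. Once the flow has entered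
this neighbourhood, `L_q` is therefore squeezed between `c e^{-2Lt}` and `c̄ e^{-2mt}`, `1 < m ≤ L`.
-/

open Set Real Topology RealInnerProductSpace

theorem sub_le_sub_of_hasDerivAt_le {f g f' g' : ℝ → ℝ} {a b : ℝ} (hab : a ≤ b)
    (hf : ∀ s ∈ Icc a b, HasDerivAt f (f' s) s) (hg : ∀ s ∈ Icc a b, HasDerivAt g (g' s) s)
    (hfg : ∀ s ∈ Icc a b, f' s ≤ g' s) : f b - f a ≤ g b - g a := by
  have hmono : MonotoneOn (fun s => g s - f s) (Icc a b) := by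
    refine monotoneOn_of_hasDerivWithinAt_nonneg (convex_Icc a b)
      (fun s hs => ((hg s hs).sub (hf s hs)).continuousAt.continuousWithinAt)
      (fun s hs => ((hg s (interior_subset hs)).sub (hf s (interior_subset hs))).hasDerivWithinAt)
      (fun s hs => sub_nonneg.2 (hfg s (interior_subset hs)))
  have := hmono (left_mem_Icc.2 hab) (right_mem_Icc.2 hab) hab
  linarith

theorem add_deriv_add_half_le_of_le_deriv2 {f f' f'' : ℝ → ℝ} {c : ℝ}
    (hf : ∀ s ∈ Icc (0 : ℝ) 1, HasDerivAt f (f' s) s)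
    (hf' : ∀ s ∈ Icc (0 : ℝ) 1, HasDerivAt f' (f'' s) s)
    (hc : ∀ s ∈ Icc (0 : ℝ) 1, c ≤ f'' s) :
    f 0 + f' 0 + c / 2 ≤ f 1 := by
  have hlin : ∀ s ∈ Icc (0 : ℝ) 1, f' 0 + c * s ≤ f' s := by
    intro s hs
    have := sub_le_sub_of_hasDerivAt_le hs.1 (f := fun u => c * u)
      (fun u _ => by simpa using (hasDerivAt_id u).const_mul c)
      (fun u hu => hf' u ⟨hu.1, hu.2.trans hs.2⟩) (fun u hu => hc u ⟨hu.1, hu.2.trans hs.2⟩)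
    linarith
  have := sub_le_sub_of_hasDerivAt_le zero_le_one (f := fun u => f' 0 * u + c / 2 * u ^ 2)
    (fun u _ => (((hasDerivAt_id' u).const_mul (f' 0)).add
      ((hasDerivAt_pow 2 u).const_mul (c / 2))).congr_deriv (by ring))
    hf hlin
  linarith

theorem sub_sq_div_le_log_sub_log_add {a b : ℝ} (ha : 0 < a) (hb : 0 < b) :
    (b - a) ^ 2 / (2 * max a b ^ 2) ≤ log a - log b + (b - a) / a := by
  have hz : ∀ s ∈ Icc (0 : ℝ) 1, 0 < a + s * (b - a) ∧ a + s * (b - a) ≤ max a b :=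
    fun s hs => by
      constructor <;> nlinarith [hs.1, hs.2, le_max_left a b, le_max_right a b,
        mul_nonneg hs.1 hb.le, mul_nonneg (sub_nonneg.2 hs.2) ha.le]
  have hzd : ∀ s, HasDerivAt (fun s => a + s * (b - a)) (b - a) s := fun s => by
    simpa using ((hasDerivAt_id s).mul_const (b - a)).const_add a
  have key := add_deriv_add_half_le_of_le_deriv2 (f := fun s => -log (a + s * (b - a)))
    (f' := fun s => -((b - a) / (a + s * (b - a))))
    (f'' := fun s => (b - a) ^ 2 / (a + s * (b - a)) ^ 2) (c := (b - a) ^ 2 / max a b ^ 2)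
    (fun s hs => ((hzd s).log (hz s hs).1.ne').neg)
    (fun s hs => ((hasDerivAt_const s (b - a)).div (hzd s) (hz s hs).1.ne').neg.congr_deriv
      (by ring))
    (fun s hs => div_le_div_of_nonneg_left (sq_nonneg _) (pow_pos (hz s hs).1 2)
      (pow_le_pow_left₀ (hz s hs).1.le (hz s hs).2 2))
  simp only [zero_mul, add_zero, one_mul, add_sub_cancel] at key
  rw [div_div, mul_comm] at key
  linarith

theorem monotoneOn_mul_exp_of_hasDerivAt {V V' : ℝ → ℝ} {s : Set ℝ} {a : ℝ} (hs : Convex ℝ s)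
    (hV : ∀ t ∈ s, HasDerivAt V (V' t) t) (h : ∀ t ∈ s, -(a * V t) ≤ V' t) :
    MonotoneOn (fun t => V t * exp (a * t)) s := by
  have hd : ∀ t ∈ s, HasDerivAt (fun t => V t * exp (a * t)) ((V' t + a * V t) * exp (a * t)) t :=
    fun t ht => ((hV t ht).mul ((hasDerivAt_id' t).const_mul a).exp).congr_deriv (by ring)
  exact monotoneOn_of_hasDerivWithinAt_nonneg hs
    (fun t ht => (hd t ht).continuousAt.continuousWithinAt)
    (fun t ht => (hd t (interior_subset ht)).hasDerivWithinAt)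
    (fun t ht => mul_nonneg (by linarith [h t (interior_subset ht)]) (exp_pos _).le)

theorem antitoneOn_mul_exp_of_hasDerivAt {V V' : ℝ → ℝ} {s : Set ℝ} {a : ℝ} (hs : Convex ℝ s)
    (hV : ∀ t ∈ s, HasDerivAt V (V' t) t) (h : ∀ t ∈ s, V' t ≤ -(a * V t)) :
    AntitoneOn (fun t => V t * exp (a * t)) s := by
  have hneg := monotoneOn_mul_exp_of_hasDerivAt hs (V := fun t => -V t)
    (fun t ht => (hV t ht).neg) (fun t ht => by linarith [h t ht])
  intro x hx y hy hxy
  have := hneg hx hy hxy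
  simp only [neg_mul, neg_le_neg_iff] at this
  exact this

theorem exists_le_of_mul_exp_le {V : ℝ → ℝ} {a ε : ℝ} (ha : 0 < a) (hε : 0 < ε)
    (h : ∀ t ≥ 0, V t * exp (a * t) ≤ V 0) : ∃ T ≥ 0, V T ≤ ε := by
  have hlim : Tendsto (fun t => V 0 * exp (-(a * t))) atTop (𝓝 0) := by
    simpa using (tendsto_exp_neg_atTop_nhds_zero.comp
      (tendsto_id.const_mul_atTop ha)).const_mul (V 0)
  obtain ⟨T, hT, hle⟩ := ((eventually_ge_atTop 0).and (hlim.eventually (ge_mem_nhds hε))).exists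
  refine ⟨T, hT, le_trans ?_ hle⟩
  rw [exp_neg, ← div_eq_mul_inv, le_div_iff₀ (exp_pos _)]
  exact h T hT

theorem exists_exp_bounds_of_hasDerivAt {V G : ℝ → ℝ} {m₀ m L ε : ℝ} (hm₀ : 0 < m₀)
    (hε : 0 < ε) (hV0 : 0 < V 0) (hV : ∀ t ≥ 0, HasDerivAt V (-G t) t) (hG : ∀ t ≥ 0, 0 ≤ G t)
    (hglob : ∀ t ≥ 0, 2 * m₀ * V t ≤ G t)
    (hloc : ∀ t ≥ 0, V t ≤ ε → 2 * m * V t ≤ G t ∧ G t ≤ 2 * L * V t) :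
    ∃ c cbar T : ℝ, 0 < c ∧ 0 < cbar ∧ 0 ≤ T ∧ ∀ t ≥ T,
      c * exp (-2 * L * t) ≤ V t ∧ V t ≤ cbar * exp (-2 * m * t) := by
  have hVcont : ContinuousOn V (Ici 0) := fun t ht => (hV t ht).continuousAt.continuousWithinAt
  have hanti : AntitoneOn V (Ici 0) :=
    antitoneOn_of_hasDerivWithinAt_nonpos (convex_Ici 0) hVcont
      (fun t ht => (hV t (interior_subset ht)).hasDerivWithinAt)
      (fun t ht => neg_nonpos.2 (hG t (interior_subset ht)))
  have hdecay : ∀ t ≥ 0, V t * exp (2 * m₀ * t) ≤ V 0 := fun t ht => by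
    simpa using antitoneOn_mul_exp_of_hasDerivAt (convex_Ici 0) hV
      (fun t ht => by linarith [hglob t ht]) self_mem_Ici ht ht
  set ε' := min ε (V 0)
  have hε' : 0 < ε' := lt_min hε hV0
  obtain ⟨T₀, hT₀, hVT₀⟩ := exists_le_of_mul_exp_le (by positivity) hε' hdecay
  -- start the comparison at a time `T` with `V T = ε'`: then `V T > 0`, and `V ≤ ε` from `T` on
  obtain ⟨T, hT, hVT⟩ : ε' ∈ V '' Icc 0 T₀ :=
    intermediate_value_Icc' hT₀ (hVcont.mono Icc_subset_Ici_self) ⟨hVT₀, min_le_right _ _⟩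
  have hsmall : ∀ t ≥ T, 0 ≤ t ∧ V t ≤ ε := fun t ht =>
    ⟨hT.1.trans ht, (hanti hT.1 (hT.1.trans ht) ht).trans (hVT.le.trans (min_le_left _ _))⟩
  have hlow := monotoneOn_mul_exp_of_hasDerivAt (a := 2 * L) (convex_Ici T)
    (fun t ht => hV t (hsmall t ht).1)
    (fun t ht => by linarith [(hloc t (hsmall t ht).1 (hsmall t ht).2).2])
  have hup := antitoneOn_mul_exp_of_hasDerivAt (a := 2 * m) (convex_Ici T)
    (fun t ht => hV t (hsmall t ht).1)
    (fun t ht => by linarith [(hloc t (hsmall t ht).1 (hsmall t ht).2).1])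
  refine ⟨ε' * exp (2 * L * T), ε' * exp (2 * m * T), T, by positivity, by positivity, hT.1,
    fun t ht => ⟨?_, ?_⟩⟩
  · rw [show -2 * L * t = -(2 * L * t) by ring, exp_neg, ← div_eq_mul_inv, div_le_iff₀ (exp_pos _),
      ← hVT]
    exact hlow self_mem_Ici ht ht
  · rw [show -2 * m * t = -(2 * m * t) by ring, exp_neg, ← div_eq_mul_inv, le_div_iff₀ (exp_pos _),
      ← hVT]
    exact hup self_mem_Ici ht ht

theorem mul_sub_sq_div_two_le_mul_log_sub_log_add {a b μ w : ℝ} (ha : 0 < a) (hb : 0 < b)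
    (hμ : 0 ≤ μ) (hμw : μ * max a b ^ 2 ≤ w) :
    μ * (b - a) ^ 2 / 2 ≤ w * (log a - log b + (b - a) / a) := by
  have hmax : 0 < max a b ^ 2 := pow_pos (lt_max_of_lt_left ha) 2
  calc μ * (b - a) ^ 2 / 2 = μ * max a b ^ 2 * ((b - a) ^ 2 / (2 * max a b ^ 2)) := by
        field_simp
    _ ≤ w * ((b - a) ^ 2 / (2 * max a b ^ 2)) := by gcongr
    _ ≤ w * (log a - log b + (b - a) / a) :=
        mul_le_mul_of_nonneg_left (sub_sq_div_le_log_sub_log_add ha hb)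
          ((mul_nonneg hμ hmax.le).trans hμw)

theorem two_mul_le_norm_sq_of_add_inner_add_le_zero {F : Type*} [NormedAddCommGroup F]
    [InnerProductSpace ℝ F] {f μ : ℝ} {g v : F} (hμ : 0 < μ)
    (h : f + ⟪g, v⟫ + μ * ‖v‖ ^ 2 / 2 ≤ 0) : 2 * μ * f ≤ ‖g‖ ^ 2 := by
  have hsq := norm_add_sq_real g (μ • v)
  rw [inner_smul_right, norm_smul, Real.norm_of_nonneg hμ.le] at hsq
  nlinarith [sq_nonneg ‖g + μ • v‖]

theorem exists_gt_forall_lt_of_finite {ι : Type*} [Finite ι] {a : ℝ} {f : ι → ℝ}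
    (h : ∀ i, a < f i) : ∃ b, a < b ∧ ∀ i, b < f i :=
  ((eventually_mem_nhdsWithin (a := a) (s := Ioi a)).and (eventually_all.2 fun i =>
    (eventually_lt_nhds (h i)).filter_mono nhdsWithin_le_nhds)).exists

theorem HasGradientAt.hasDerivAt_comp_of_hasDerivAt_neg_gradient {F : Type*}
    [NormedAddCommGroup F] [InnerProductSpace ℝ F] [CompleteSpace F] {f : F → ℝ} {g : F}
    {γ : ℝ → F} {t : ℝ} (hf : HasGradientAt f g (γ t))
    (hγ : HasDerivAt γ (-_root_.gradient f (γ t)) t) :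
    HasDerivAt (fun s => f (γ s)) (-‖g‖ ^ 2) t := by
  rw [hf.gradient] at hγ
  have h := hf.hasFDerivAt.comp_hasDerivAt t hγ
  rwa [InnerProductSpace.toDual_apply_apply, inner_neg_right, real_inner_self_eq_norm_sq] at h

section Loss

variable {n : ℕ} {q : Fin (n + 1) → ℝ}

@[simp] theorem mixDist_castSucc (η : E n) (j : Fin n) : mixDist η j.castSucc = η j := by
  simp [mixDist]

@[simp] theorem mixDist_last (η : E n) : mixDist η (Fin.last n) = 1 - ∑ i, η i := by
  simp [mixDist]

@[simp] theorem etaCoord_apply (j : Fin n) : etaCoord q j = q j.castSucc :=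
  rfl

theorem mixDist_pos {η : E n} (hη : η ∈ Δset n) (i : Fin (n + 1)) : 0 < mixDist η i := by
  induction i using Fin.lastCases with
  | last => simpa using hη.2
  | cast j => simpa using hη.1 j

theorem lt_one_of_mem_Δset {η : E n} (hη : η ∈ Δset n) (j : Fin n) : η j < 1 :=
  (Finset.single_le_sum (fun i _ => (hη.1 i).le) (Finset.mem_univ j)).trans_lt hη.2

theorem mixDist_etaCoord (hq : q ∈ simplex n) : mixDist (etaCoord q) = q := by
  have hsum := hq.2
  rw [Fin.sum_univ_castSucc] at hsum
  funext i
  induction i using Fin.lastCases with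
  | last => simp only [mixDist_last, etaCoord_apply]; linarith
  | cast j => simp

theorem etaCoord_mem (hq : q ∈ simplex n) : etaCoord q ∈ Δset n := by
  have hsum := hq.2
  rw [Fin.sum_univ_castSucc] at hsum
  exact ⟨fun j => hq.1 j.castSucc, by simp only [etaCoord_apply]; linarith [hq.1 (Fin.last n)]⟩

theorem etaCoord_injOn : Set.InjOn (etaCoord (n := n)) (simplex n) := fun p hp q hq h => by
  rw [← mixDist_etaCoord hp, ← mixDist_etaCoord hq, h]

theorem abs_mixDist_sub_le (x y : E n) (i : Fin (n + 1)) :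
    |mixDist x i - mixDist y i| ≤ n * ‖x - y‖ := by
  induction i using Fin.lastCases with
  | last =>
    calc |mixDist x (Fin.last n) - mixDist y (Fin.last n)| = |∑ j, (x - y) j| := by
          rw [abs_sub_comm]; simp [Finset.sum_sub_distrib]
      _ ≤ ∑ j, |(x - y) j| := Finset.abs_sum_le_sum_abs _ _
      _ ≤ ∑ _j : Fin n, ‖x - y‖ := Finset.sum_le_sum fun j _ => PiLp.norm_apply_le (x - y) j
      _ = n * ‖x - y‖ := by simp
  | cast j =>
    have hn : (1 : ℝ) ≤ n := by exact_mod_cast j.pos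
    calc |mixDist x j.castSucc - mixDist y j.castSucc| = ‖(x - y) j‖ := by simp [Real.norm_eq_abs]
      _ ≤ ‖x - y‖ := PiLp.norm_apply_le (x - y) j
      _ ≤ n * ‖x - y‖ := le_mul_of_one_le_left (norm_nonneg _) hn

theorem Leta_etaCoord (hq : q ∈ simplex n) : Leta q (etaCoord q) = 0 := by
  simp [Leta, KL, mixDist_etaCoord hq, div_self (hq.1 _).ne']

theorem isOpen_Δset : IsOpen (Δset n) := by
  have hc : ∀ i : Fin n, Continuous fun η : E n => η i :=
    fun i => (EuclideanSpace.proj i).continuous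
  show IsOpen ({η : E n | ∀ i, 0 < η i} ∩ {η | ∑ i, η i < 1})
  rw [Set.ofPred_forall]
  exact (isOpen_iInter_of_finite fun i => isOpen_lt continuous_const (hc i)).inter
    (isOpen_lt (continuous_finsetSum _ fun i _ => hc i) continuous_const)

def gradLeta (q : Fin (n + 1) → ℝ) (η : E n) : E n :=
  WithLp.toLp 2 fun j => q (Fin.last n) / (1 - ∑ i, η i) - q j.castSucc / η j

theorem inner_gradLeta (x y : E n) :
    ⟪gradLeta q x, y - x⟫ = -∑ i, q i * (mixDist y i - mixDist x i) / mixDist x i := by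
  rw [Fin.sum_univ_castSucc]
  simp only [gradLeta, PiLp.inner_apply, RCLike.inner_apply, conj_trivial, mixDist_castSucc,
    mixDist_last, PiLp.sub_apply]
  have hlast : 1 - ∑ i, y i - (1 - ∑ i, x i) = -∑ i, (y i - x i) := by
    rw [Finset.sum_sub_distrib]; ring
  rw [hlast, mul_neg, neg_div, Finset.mul_sum, Finset.sum_div, ← sub_eq_add_neg,
    ← Finset.sum_sub_distrib, ← Finset.sum_neg_distrib]
  exact Finset.sum_congr rfl fun j _ => by ring

theorem gradLeta_etaCoord (hq : q ∈ simplex n) :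
    gradLeta q (etaCoord q) = 0 := by
  ext j
  have h := congrFun (mixDist_etaCoord hq) (Fin.last n)
  simp only [mixDist_last, etaCoord_apply] at h
  simp [gradLeta, h, div_self (hq.1 _).ne']

theorem Leta_eq_sum_log_sub (hq : ∀ i, 0 < q i) {η : E n} (hη : η ∈ Δset n) :
    Leta q η = ∑ j : Fin n, q j.castSucc * (log (q j.castSucc) - log (η j))
      + q (Fin.last n) * (log (q (Fin.last n)) - log (1 - ∑ j, η j)) := by
  rw [Leta, KL, Fin.sum_univ_castSucc]
  simp only [mixDist_castSucc, mixDist_last]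
  rw [← mixDist_last, log_div (hq _).ne' (mixDist_pos hη _).ne']
  congr 1
  exact Finset.sum_congr rfl fun j _ => by
    rw [log_div (hq _).ne' (hη.1 j).ne']

theorem hasGradientAt_Leta (hq : ∀ i, 0 < q i) {η : E n} (hη : η ∈ Δset n) :
    HasGradientAt (Leta q) (gradLeta q η) η := by
  have hproj : ∀ j : Fin n,
      HasFDerivAt (fun x : E n => x j) (EuclideanSpace.proj j : E n →L[ℝ] ℝ) η :=
    fun j => (EuclideanSpace.proj (𝕜 := ℝ) j).hasFDerivAt
  have hcoord : ∀ j : Fin n,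
      HasFDerivAt (fun x : E n => q j.castSucc * (log (q j.castSucc) - log (x j)))
        (q j.castSucc • -((η j)⁻¹ • (EuclideanSpace.proj j : E n →L[ℝ] ℝ))) η := fun j =>
    (((hproj j).log (hη.1 j).ne').const_sub _).const_mul _
  have hlast :
      HasFDerivAt (fun x : E n => q (Fin.last n) * (log (q (Fin.last n)) - log (1 - ∑ j, x j)))
        (q (Fin.last n) • -((1 - ∑ j, η j)⁻¹ • -∑ j, (EuclideanSpace.proj j : E n →L[ℝ] ℝ))) η :=
    ((((HasFDerivAt.fun_sum fun j _ => hproj j).const_sub 1).log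
      (sub_pos.2 hη.2).ne').const_sub _).const_mul _
  have hF := ((HasFDerivAt.fun_sum fun j _ => hcoord j).add hlast).congr_of_eventuallyEq
    (Filter.eventually_of_mem (isOpen_Δset.mem_nhds hη) fun x hx => Leta_eq_sum_log_sub hq hx)
  rw [hasGradientAt_iff_hasFDerivAt]
  refine hF.congr_fderiv (ContinuousLinearMap.ext fun v => ?_)
  simp only [smul_neg, Finset.sum_neg_distrib, neg_neg, add_apply, neg_apply, sum_apply,
    smul_apply, PiLp.proj_apply, smul_eq_mul, gradLeta, InnerProductSpace.toDual_apply_apply,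
    PiLp.inner_apply, RCLike.inner_apply, ringHom_apply]
  rw [Finset.mul_sum, Finset.mul_sum, neg_add_eq_sub, ← Finset.sum_sub_distrib]
  exact Finset.sum_congr rfl fun j _ => by ring

-- Summand by summand, `-qᵢ log pᵢ` lies above its tangent by `qᵢ (Δpᵢ)² / (2 max²)`: the first
-- `n` summands give the quadratic term, the last one only convexity.
theorem Leta_add_inner_add_sq_le (hq : ∀ i, 0 < q i) {x y : E n} (hx : x ∈ Δset n)
    (hy : y ∈ Δset n) {μ : ℝ} (hμ : 0 ≤ μ) (hμq : ∀ j, μ * max (x j) (y j) ^ 2 ≤ q j.castSucc) :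
    Leta q x + ⟪gradLeta q x, y - x⟫ + μ * ‖y - x‖ ^ 2 / 2 ≤ Leta q y := by
  set B : Fin (n + 1) → ℝ := fun i => log (mixDist x i) - log (mixDist y i)
    + (mixDist y i - mixDist x i) / mixDist x i
  have hgap : Leta q y - (Leta q x + ⟪gradLeta q x, y - x⟫) = ∑ i, q i * B i := by
    rw [inner_gradLeta, Leta, Leta, KL, KL, ← sub_sub, ← Finset.sum_sub_distrib, sub_neg_eq_add,
      ← Finset.sum_add_distrib]
    refine Finset.sum_congr rfl fun i _ => ?_
    rw [log_div (hq i).ne' (mixDist_pos hy i).ne', log_div (hq i).ne' (mixDist_pos hx i).ne']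
    ring
  have hcoord : ∀ j : Fin n, μ * (y j - x j) ^ 2 / 2 ≤ q j.castSucc * B j.castSucc := fun j => by
    simpa [B] using mul_sub_sq_div_two_le_mul_log_sub_log_add (hx.1 j) (hy.1 j) hμ (hμq j)
  have hlast : 0 ≤ q (Fin.last n) * B (Fin.last n) := by
    simpa using mul_sub_sq_div_two_le_mul_log_sub_log_add (mixDist_pos hx _) (mixDist_pos hy _)
      le_rfl (by simpa using (hq (Fin.last n)).le)
  have hsum : μ * ‖y - x‖ ^ 2 / 2 ≤ ∑ i, q i * B i := by
    rw [Fin.sum_univ_castSucc, EuclideanSpace.real_norm_sq_eq, Finset.mul_sum, Finset.sum_div]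
    exact le_add_of_le_of_nonneg (Finset.sum_le_sum fun j _ => by simpa using hcoord j) hlast
  linarith

theorem mul_norm_sub_sq_le_Leta (hq : q ∈ simplex n) {x : E n} (hx : x ∈ Δset n) {μ : ℝ}
    (hμ : 0 ≤ μ) (hμq : ∀ j, μ * max (q j.castSucc) (x j) ^ 2 ≤ q j.castSucc) :
    μ * ‖x - etaCoord q‖ ^ 2 / 2 ≤ Leta q x := by
  simpa [Leta_etaCoord hq, gradLeta_etaCoord hq] using
    Leta_add_inner_add_sq_le hq.1 (etaCoord_mem hq) hx hμ hμq

theorem two_mul_Leta_le_norm_gradLeta_sq (hq : q ∈ simplex n) {x : E n} (hx : x ∈ Δset n)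
    {μ : ℝ} (hμ : 0 < μ) (hμq : ∀ j, μ * max (x j) (q j.castSucc) ^ 2 ≤ q j.castSucc) :
    2 * μ * Leta q x ≤ ‖gradLeta q x‖ ^ 2 := by
  refine two_mul_le_norm_sq_of_add_inner_add_le_zero hμ (v := etaCoord q - x) ?_
  simpa [Leta_etaCoord hq] using Leta_add_inner_add_sq_le hq.1 hx (etaCoord_mem hq) hμ.le hμq

theorem mul_max_sq_le_of_mem_Δset {μ : ℝ} (hμ : 0 ≤ μ) (hμq : ∀ j : Fin n, μ ≤ q j.castSucc)
    {x y : E n} (hx : x ∈ Δset n) (hy : y ∈ Δset n) (j : Fin n) :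
    μ * max (x j) (y j) ^ 2 ≤ q j.castSucc := by
  have hmax : max (x j) (y j) ^ 2 ≤ 1 :=
    pow_le_one₀ (le_max_of_le_left (hx.1 j).le)
      (max_le (lt_one_of_mem_Δset hx j).le (lt_one_of_mem_Δset hy j).le)
  nlinarith [hμq j]

theorem mul_max_sq_le_of_norm_sub_le {μ δ : ℝ} (hμ : 0 ≤ μ)
    (hμδ : ∀ j : Fin n, μ * (q j.castSucc + δ) ^ 2 ≤ q j.castSucc) {x : E n} (hx : x ∈ Δset n)
    (hxδ : ‖x - etaCoord q‖ ≤ δ) (j : Fin n) :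
    μ * max (x j) (q j.castSucc) ^ 2 ≤ q j.castSucc := by
  have hxj : x j - q j.castSucc ≤ δ :=
    (le_abs_self _).trans ((PiLp.norm_apply_le (x - etaCoord q) j).trans hxδ)
  have hmax : max (x j) (q j.castSucc) ^ 2 ≤ (q j.castSucc + δ) ^ 2 :=
    pow_le_pow_left₀ (le_max_of_le_left (hx.1 j).le)
      (max_le (by linarith) (by linarith [(norm_nonneg _).trans hxδ])) 2
  nlinarith [hμδ j]

theorem abs_div_mixDist_sub_one_le (hq : q ∈ simplex n) {δ : ℝ} (hδ : ∀ i, 2 * n * δ ≤ q i)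
    {x : E n} (hxδ : ‖x - etaCoord q‖ ≤ δ) (i : Fin (n + 1)) :
    |q i / mixDist x i - 1| ≤ 2 * n * ‖x - etaCoord q‖ / q i := by
  have hdist : |mixDist x i - q i| ≤ n * ‖x - etaCoord q‖ := by
    simpa [mixDist_etaCoord hq] using abs_mixDist_sub_le x (etaCoord q) i
  have hnρ : n * ‖x - etaCoord q‖ ≤ n * δ := mul_le_mul_of_nonneg_left hxδ n.cast_nonneg
  have hqi := hq.1 i
  have hp : q i ≤ 2 * mixDist x i := by linarith [(abs_le.1 hdist).1, hδ i]
  rw [div_sub_one (by linarith), abs_div, abs_of_pos (a := mixDist x i) (by linarith),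
    abs_sub_comm, div_le_div_iff₀ (by linarith) hqi]
  nlinarith [abs_nonneg (mixDist x i - q i)]

theorem norm_gradLeta_sq_le (hq : q ∈ simplex n) {δ : ℝ} (hδ : ∀ i, 2 * n * δ ≤ q i)
    {x : E n} (hxδ : ‖x - etaCoord q‖ ≤ δ) :
    ‖gradLeta q x‖ ^ 2 ≤ (∑ j : Fin n, (2 * n * (1 / q (Fin.last n) + 1 / q j.castSucc)) ^ 2)
      * ‖x - etaCoord q‖ ^ 2 := by
  rw [EuclideanSpace.real_norm_sq_eq, Finset.sum_mul]
  refine Finset.sum_le_sum fun j _ => ?_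
  have hj := abs_div_mixDist_sub_one_le hq hδ hxδ j.castSucc
  have hl := abs_div_mixDist_sub_one_le hq hδ hxδ (Fin.last n)
  have hg : gradLeta q x j = (q (Fin.last n) / mixDist x (Fin.last n) - 1)
      - (q j.castSucc / mixDist x j.castSucc - 1) := by simp [gradLeta]
  have habs :
      |gradLeta q x j| ≤ 2 * n * (1 / q (Fin.last n) + 1 / q j.castSucc) * ‖x - etaCoord q‖ :=
    calc |gradLeta q x j| ≤ _ := hg ▸ abs_sub _ _
      _ ≤ _ := add_le_add hl hj
      _ = _ := by ring
  rw [← sq_abs, ← mul_pow]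
  exact pow_le_pow_left₀ (abs_nonneg _) habs 2

theorem exists_local_modulus_and_radius (hq : q ∈ simplex n) :
    ∃ m δ : ℝ, 1 < m ∧ 0 < δ ∧ (∀ j : Fin n, m * (q j.castSucc + δ) ^ 2 ≤ q j.castSucc) ∧
      ∀ i, 2 * n * δ ≤ q i := by
  -- `q j < 1` gives room for a rate `m > 1` with `m * q j ^ 2 < q j`
  obtain ⟨m, hm, hmq⟩ := exists_gt_forall_lt_of_finite (f := fun j : Fin n => 1 / q j.castSucc)
    fun j => one_lt_one_div (hq.1 _) (lt_one_of_mem_Δset (etaCoord_mem hq) j)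
  have hconv : ∀ j : Fin n, ∀ᶠ δ in 𝓝 0, m * (q j.castSucc + δ) ^ 2 ≤ q j.castSucc := fun j => by
    have hmj : m * q j.castSucc ^ 2 < q j.castSucc := by
      have := hmq j
      rw [lt_div_iff₀ (hq.1 _)] at this
      nlinarith [hq.1 j.castSucc]
    exact ((continuous_const.mul ((continuous_const.add continuous_id).pow 2)).tendsto' 0 _
      (by simp)).eventually_le_const hmj
  have hrad : ∀ i, ∀ᶠ δ in 𝓝 0, 2 * n * δ ≤ q i := fun i =>
    ((continuous_const.mul continuous_id).tendsto' 0 _ (by simp)).eventually_le_const (hq.1 i)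
  obtain ⟨δ, hδ, hδm, hδq⟩ := ((eventually_mem_nhdsWithin (a := (0 : ℝ)) (s := Ioi 0)).and
    (((eventually_all.2 hconv).and (eventually_all.2 hrad)).filter_mono nhdsWithin_le_nhds)).exists
  exact ⟨m, δ, hm, hδ, hδm, hδq⟩

theorem exists_quadratic_growth_and_PL (hq : q ∈ simplex n) :
    ∃ m₀ > 0, ∀ x ∈ Δset n,
      m₀ * ‖x - etaCoord q‖ ^ 2 / 2 ≤ Leta q x ∧ 2 * m₀ * Leta q x ≤ ‖gradLeta q x‖ ^ 2 := by
  obtain ⟨m₀, hm₀, hm₀q⟩ := exists_gt_forall_lt_of_finite fun j : Fin n => hq.1 j.castSucc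
  have hm₀q' : ∀ j : Fin n, m₀ ≤ q j.castSucc := fun j => (hm₀q j).le
  refine ⟨m₀, hm₀, fun x hx => ⟨?_, ?_⟩⟩
  · exact mul_norm_sub_sq_le_Leta hq hx hm₀.le
      (by simpa using mul_max_sq_le_of_mem_Δset hm₀.le hm₀q' (etaCoord_mem hq) hx)
  · exact two_mul_Leta_le_norm_gradLeta_sq hq hx hm₀
      (by simpa using mul_max_sq_le_of_mem_Δset hm₀.le hm₀q' hx (etaCoord_mem hq))

theorem exists_local_gradient_sq_bounds (hq : q ∈ simplex n) :
    ∃ m L ε : ℝ, 1 < m ∧ m ≤ L ∧ 0 < ε ∧ ∀ x ∈ Δset n, Leta q x ≤ ε →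
      2 * m * Leta q x ≤ ‖gradLeta q x‖ ^ 2 ∧ ‖gradLeta q x‖ ^ 2 ≤ 2 * L * Leta q x := by
  obtain ⟨m₀, hm₀, hglob⟩ := exists_quadratic_growth_and_PL hq
  obtain ⟨m, δ, hm, hδ, hmδ, hδq⟩ := exists_local_modulus_and_radius hq
  set C := ∑ j : Fin n, (2 * n * (1 / q (Fin.last n) + 1 / q j.castSucc)) ^ 2
  refine ⟨m, max m (C / m₀), m₀ * δ ^ 2 / 2, hm, le_max_left _ _, by positivity,
    fun x hx hxε => ?_⟩
  have hqg := (hglob x hx).1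
  have hxδ : ‖x - etaCoord q‖ ≤ δ :=
    (pow_le_pow_iff_left₀ (norm_nonneg _) hδ.le two_ne_zero).1 (by nlinarith)
  refine ⟨two_mul_Leta_le_norm_gradLeta_sq hq hx (by linarith)
    (mul_max_sq_le_of_norm_sub_le (by linarith) hmδ hx hxδ), ?_⟩
  have hC : 0 ≤ C := Finset.sum_nonneg fun j _ => sq_nonneg _
  calc ‖gradLeta q x‖ ^ 2 ≤ C * ‖x - etaCoord q‖ ^ 2 := norm_gradLeta_sq_le hq hδq hxδ
    _ ≤ C / m₀ * (2 * Leta q x) := by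
        rw [div_mul_eq_mul_div, le_div_iff₀ hm₀]; nlinarith
    _ ≤ max m (C / m₀) * (2 * Leta q x) :=
        mul_le_mul_of_nonneg_right (le_max_right _ _) (by nlinarith [sq_nonneg ‖x - etaCoord q‖])
    _ = 2 * max m (C / m₀) * Leta q x := by ring

end Loss

/-- Convergence of the `η`-gradient flow: exponential rate higher than 2. -/
theorem stmt_7 {n : ℕ} (q p₀ : Fin (n+1) → ℝ)
    (hq : q ∈ simplex n) (hp₀ : p₀ ∈ simplex n) (hne : p₀ ≠ q)
    (η : ℝ → E n) (hmem : ∀ t ≥ (0 : ℝ), η t ∈ Δset n)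
    (hη0 : η 0 = etaCoord p₀)
    (hode : ∀ t ≥ (0 : ℝ), HasDerivAt η (-(gradient (Leta q) (η t))) t) :
    ∃ m L c cbar T : ℝ, 1 < m ∧ m ≤ L ∧ 0 < c ∧ 0 < cbar ∧ 0 ≤ T ∧
      ∀ t ≥ T,
        c * Real.exp (-2 * L * t) ≤ Leta q (η t) ∧
        Leta q (η t) ≤ cbar * Real.exp (-2 * m * t) ∧
        cbar * Real.exp (-2 * m * t) ≤ cbar * Real.exp (-2 * t) := by
  obtain ⟨m₀, hm₀, hglob⟩ := exists_quadratic_growth_and_PL hq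
  obtain ⟨m, L, ε, hm, hmL, hε, hloc⟩ := exists_local_gradient_sq_bounds hq
  have hV0 : 0 < Leta q (η 0) := by
    have hdist : 0 < ‖η 0 - etaCoord q‖ := norm_pos_iff.2 <| sub_ne_zero.2 fun h =>
      hne (etaCoord_injOn hp₀ hq (hη0 ▸ h))
    nlinarith [(hglob _ (hmem 0 le_rfl)).1, mul_pos hm₀ (pow_pos hdist 2)]
  obtain ⟨c, cbar, T, hc, hcbar, hT, hbounds⟩ := exists_exp_bounds_of_hasDerivAt
    (V := fun t => Leta q (η t)) (G := fun t => ‖gradLeta q (η t)‖ ^ 2) hm₀ hε hV0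
    (fun t ht => (hasGradientAt_Leta hq.1 (hmem t ht)).hasDerivAt_comp_of_hasDerivAt_neg_gradient
      (hode t ht))
    (fun t _ => sq_nonneg _) (fun t ht => (hglob _ (hmem t ht)).2) (fun t ht => hloc _ (hmem t ht))
  refine ⟨m, L, c, cbar, T, hm, hmL, hc, hcbar, hT, fun t ht => ⟨(hbounds t ht).1,
    (hbounds t ht).2, mul_le_mul_of_nonneg_left (exp_le_exp.2 (by nlinarith)) hcbar.le⟩⟩

end
end

section
/- Let Q be an n×n real symmetric positive definite matrix with condition number κ = λ_max(Q)/λ_min(Q), and set α = 2/(λ_min(Q) + λ_max(Q)). Let ε > 0 and let Δ : ℕ → ℝ^{n×n} be a sequence of matrices with ‖Δ(k)‖₂ < 1/κ − ε for all k ≥ 0. Let e : ℕ → ℝⁿ satisfy e(k+1) = (I − α(I + Δ(k))Q)·e(k) for all k ≥ 0, with arbitrary e(0). Then, setting ρ = 1 − εκ/(κ+1), one has 0 < ρ < 1 and ‖e(k)‖ ≤ ρᵏ·‖e(0)‖ for all k ≥ 0; in particular e(k) → 0 as k → ∞. -/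
open Filter

noncomputable section

/-!
With `m = λ_min(Q)`, `M = λ_max(Q)` and `α = 2/(m+M)`, the matrix `I - αQ` acts diagonally in an
orthonormal eigenbasis of `Q` with entries `1 - αλ ∈ [-(M-m)/(M+m), (M-m)/(M+m)]`, so
`‖I - αQ‖₂ ≤ (M-m)/(M+m)`. The perturbation `αΔQ` adds at most `2M‖Δ‖₂/(M+m)`, and
`‖Δ‖₂ < m/M - ε` turns the sum into `1 - 2εM/(M+m) ≤ ρ`. Each step is then a contraction
by `ρ`.
-/

open Matrix

theorem OrthonormalBasis.opNorm_le_of_repr_apply {ι 𝕜 F : Type*} [Fintype ι] [RCLike 𝕜]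
    [NormedAddCommGroup F] [InnerProductSpace 𝕜 F] (b : OrthonormalBasis ι 𝕜 F)
    {T : F →L[𝕜] F} {d : ι → 𝕜} (hT : ∀ x i, b.repr (T x) i = d i * b.repr x i)
    {c : ℝ} (hc : 0 ≤ c) (hd : ∀ i, ‖d i‖ ≤ c) : ‖T‖ ≤ c := by
  refine T.opNorm_le_bound hc fun x => ?_
  rw [← b.repr.norm_map, ← b.repr.norm_map x]
  refine le_of_pow_le_pow_left₀ two_ne_zero (by positivity) ?_
  rw [mul_pow, EuclideanSpace.norm_sq_eq, EuclideanSpace.norm_sq_eq, Finset.mul_sum]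
  gcongr with i
  rw [hT, norm_mul, mul_pow]
  gcongr
  exact hd i

theorem abs_one_sub_two_div_mul_le {m M μ : ℝ} (hm : 0 < m) (hmμ : m ≤ μ) (hμM : μ ≤ M) :
    |1 - 2 / (m + M) * μ| ≤ (M - m) / (M + m) := by
  have hmM : 0 < M + m := by linarith
  rw [abs_le, add_comm m M, ← mul_div_right_comm, one_sub_div hmM.ne', ← neg_div,
    div_le_div_iff_of_pos_right hmM, div_le_div_iff_of_pos_right hmM]
  constructor <;> linarith

theorem perturbed_contraction_factor_le {m M ε δ : ℝ} (hm : 0 < m) (hmM : m ≤ M)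
    (hε : 0 ≤ ε) (hδ : δ < 1 / (M / m) - ε) :
    (M - m) / (M + m) + 2 / (m + M) * (δ * M) ≤ 1 - ε * (M / m) / (M / m + 1) := by
  have hM : 0 < M := hm.trans_le hmM
  have hκ : ε * (M / m) / (M / m + 1) = ε * M / (M + m) := by field_simp
  rw [one_div_div, lt_sub_iff_add_lt, lt_div_iff₀ hM] at hδ
  rw [hκ, add_comm m M, ← mul_div_right_comm, ← add_div, one_sub_div (by positivity),
    div_le_div_iff_of_pos_right (by positivity)]
  nlinarith

theorem lamSet_eq_spectrum {n : ℕ} (A : Matrix (Fin n) (Fin n) ℝ) :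
    lamSet A = spectrum ℝ A := by
  ext μ
  rw [← Matrix.spectrum_toLin', ← Module.End.hasEigenvalue_iff_mem_spectrum,
    Module.End.hasEigenvalue_iff, Submodule.ne_bot_iff]
  simp only [Module.End.mem_eigenspace_iff, Matrix.toLin'_apply, lamSet, Set.mem_ofPred_eq]
  exact ⟨fun ⟨v, hv, h⟩ => ⟨v, h, hv⟩, fun ⟨v, h, hv⟩ => ⟨v, hv, h⟩⟩

theorem opNorm_one_sub_smul_mul_le {n : ℕ} {α : ℝ} (hα : 0 ≤ α)
    (A B : Matrix (Fin n) (Fin n) ℝ) :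
    opNorm (1 - α • ((1 + A) * B)) ≤ opNorm (1 - α • B) + α * (opNorm A * opNorm B) := by
  have hsplit : (1 : Matrix (Fin n) (Fin n) ℝ) - α • ((1 + A) * B)
      = (1 - α • B) - α • (A * B) := by
    rw [add_mul, one_mul, smul_add]
    abel
  unfold opNorm
  rw [hsplit, map_sub, map_smul, map_mul]
  calc _ ≤ _ + ‖α • (toEuclideanCLM (𝕜 := ℝ) A * toEuclideanCLM (𝕜 := ℝ) B)‖ :=
        norm_sub_le _ _
    _ ≤ _ := by
      rw [norm_smul, Real.norm_of_nonneg hα]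
      gcongr
      exact norm_mul_le _ _

namespace Matrix.IsHermitian

variable {n : ℕ} {A : Matrix (Fin n) (Fin n) ℝ} (hA : A.IsHermitian)

theorem toEuclideanCLM_eigenvectorBasis (i : Fin n) :
    toEuclideanCLM (𝕜 := ℝ) A (hA.eigenvectorBasis i)
      = hA.eigenvalues i • hA.eigenvectorBasis i :=
  WithLp.ofLp_injective _ (by simpa using hA.mulVec_eigenvectorBasis i)

theorem repr_toEuclideanCLM_apply (x : E n) (i : Fin n) :
    hA.eigenvectorBasis.repr (toEuclideanCLM (𝕜 := ℝ) A x) i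
      = hA.eigenvalues i * hA.eigenvectorBasis.repr x i := by
  have hsymm : (toEuclideanCLM (𝕜 := ℝ) A : E n →ₗ[ℝ] E n).IsSymmetric :=
    isSymmetric_toEuclideanLin_iff.mpr hA
  rw [OrthonormalBasis.repr_apply_apply, OrthonormalBasis.repr_apply_apply,
    ← real_inner_smul_left, ← hA.toEuclideanCLM_eigenvectorBasis]
  exact (hsymm _ _).symm

theorem lamSet_eq_range_eigenvalues : lamSet A = Set.range hA.eigenvalues := by
  rw [lamSet_eq_spectrum, hA.spectrum_real_eq_range_eigenvalues]

theorem lamMin_le_eigenvalues (i : Fin n) : lamMin A ≤ hA.eigenvalues i := by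
  rw [lamMin, hA.lamSet_eq_range_eigenvalues]
  exact csInf_le (Set.finite_range _).bddBelow (Set.mem_range_self i)

theorem eigenvalues_le_lamMax (i : Fin n) : hA.eigenvalues i ≤ lamMax A := by
  rw [lamMax, hA.lamSet_eq_range_eigenvalues]
  exact le_csSup (Set.finite_range _).bddAbove (Set.mem_range_self i)

theorem exists_eigenvalues_eq_lamMin [Nonempty (Fin n)] :
    ∃ i, hA.eigenvalues i = lamMin A := by
  rw [lamMin, hA.lamSet_eq_range_eigenvalues]
  exact (Set.range_nonempty _).csInf_mem (Set.finite_range _)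

end Matrix.IsHermitian

theorem Matrix.IsHermitian.nonempty_of_condNum_pos {n : ℕ} {A : Matrix (Fin n) (Fin n) ℝ}
    (hA : A.IsHermitian) (h : 0 < condNum A) : Nonempty (Fin n) := by
  -- `sSup ∅ = 0`, so an empty spectrum forces `condNum A = 0`.
  rcases isEmpty_or_nonempty (Fin n) with hn | hn
  · simp [condNum, lamMax, hA.lamSet_eq_range_eigenvalues, Set.range_eq_empty] at h
  · exact hn

theorem Matrix.IsHermitian.lamMin_le_lamMax {n : ℕ} [Nonempty (Fin n)]
    {A : Matrix (Fin n) (Fin n) ℝ} (hA : A.IsHermitian) : lamMin A ≤ lamMax A := by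
  obtain ⟨i, hi⟩ := hA.exists_eigenvalues_eq_lamMin
  exact hi ▸ hA.eigenvalues_le_lamMax i

theorem Matrix.IsHermitian.opNorm_one_sub_smul_le {n : ℕ} [Nonempty (Fin n)]
    {A : Matrix (Fin n) (Fin n) ℝ} (hA : A.IsHermitian) (hm : 0 < lamMin A) :
    opNorm (1 - (2 / (lamMin A + lamMax A)) • A)
      ≤ (lamMax A - lamMin A) / (lamMax A + lamMin A) := by
  have hmM := hA.lamMin_le_lamMax
  refine hA.eigenvectorBasis.opNorm_le_of_repr_apply
    (d := fun i => 1 - 2 / (lamMin A + lamMax A) * hA.eigenvalues i)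
    (fun x i => ?_) (div_nonneg (by linarith) (by linarith)) fun i => ?_
  · simp [map_sub, map_smul, hA.repr_toEuclideanCLM_apply]
    ring
  · exact abs_one_sub_two_div_mul_le hm (hA.lamMin_le_eigenvalues i)
      (hA.eigenvalues_le_lamMax i)

theorem Matrix.PosSemidef.opNorm_le_lamMax {n : ℕ} {A : Matrix (Fin n) (Fin n) ℝ}
    (hA : A.PosSemidef) : opNorm A ≤ lamMax A := by
  have hM : 0 ≤ lamMax A := by
    refine Real.sSup_nonneg fun μ hμ => ?_
    rw [hA.isHermitian.lamSet_eq_range_eigenvalues] at hμ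
    obtain ⟨i, rfl⟩ := hμ
    exact hA.eigenvalues_nonneg i
  refine hA.isHermitian.eigenvectorBasis.opNorm_le_of_repr_apply
    hA.isHermitian.repr_toEuclideanCLM_apply hM fun i => ?_
  rw [Real.norm_of_nonneg (hA.eigenvalues_nonneg i)]
  exact hA.isHermitian.eigenvalues_le_lamMax i

theorem Matrix.PosDef.lamMin_pos {n : ℕ} [Nonempty (Fin n)] {A : Matrix (Fin n) (Fin n) ℝ}
    (hA : A.PosDef) : 0 < lamMin A := by
  obtain ⟨i, hi⟩ := hA.isHermitian.exists_eigenvalues_eq_lamMin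
  exact hi ▸ hA.eigenvalues_pos i

theorem Matrix.PosDef.opNorm_one_sub_smul_one_add_mul_le {n : ℕ} [Nonempty (Fin n)]
    {Q D : Matrix (Fin n) (Fin n) ℝ} (hQ : Q.PosDef) {ε : ℝ} (hε : 0 ≤ ε)
    (hD : opNorm D < 1 / condNum Q - ε) :
    opNorm (1 - (2 / (lamMin Q + lamMax Q)) • ((1 + D) * Q))
      ≤ 1 - ε * condNum Q / (condNum Q + 1) := by
  have hm := hQ.lamMin_pos
  have hα : 0 ≤ 2 / (lamMin Q + lamMax Q) :=
    div_nonneg zero_le_two (by linarith [hQ.isHermitian.lamMin_le_lamMax])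
  calc _ ≤ opNorm (1 - (2 / (lamMin Q + lamMax Q)) • Q)
          + 2 / (lamMin Q + lamMax Q) * (opNorm D * opNorm Q) :=
        opNorm_one_sub_smul_mul_le hα _ _
    _ ≤ (lamMax Q - lamMin Q) / (lamMax Q + lamMin Q)
          + 2 / (lamMin Q + lamMax Q) * (opNorm D * lamMax Q) := by
        gcongr
        · exact hQ.isHermitian.opNorm_one_sub_smul_le hm
        · exact norm_nonneg _
        · exact hQ.posSemidef.opNorm_le_lamMax
    _ ≤ _ := perturbed_contraction_factor_le hm hQ.isHermitian.lamMin_le_lamMax hε hD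

theorem stmt_14_general {n : ℕ} (Q : Matrix (Fin n) (Fin n) ℝ)
    (hQ : Q.PosDef) (ε : ℝ) (hε : 0 < ε)
    (Δ : ℕ → Matrix (Fin n) (Fin n) ℝ)
    (hΔ : ∀ k, opNorm (Δ k) < 1 / condNum Q - ε)
    (e : ℕ → E n)
    (he : ∀ k, e (k + 1) =
      Matrix.toEuclideanCLM (𝕜 := ℝ)
        ((1 : Matrix (Fin n) (Fin n) ℝ) -
          (2 / (lamMin Q + lamMax Q)) • ((1 + Δ k) * Q)) (e k)) :
    (let κ := condNum Q
     let ρ := 1 - ε * κ / (κ + 1)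
     0 < ρ ∧ ρ < 1 ∧ (∀ k, ‖e k‖ ≤ ρ ^ k * ‖e 0‖) ∧
       Filter.Tendsto e Filter.atTop (nhds 0)) := by
  intro κ ρ
  have hεκ : ε < 1 / κ := by
    have : 0 ≤ opNorm (Δ 0) := norm_nonneg _
    linarith [hΔ 0]
  have hκ : 0 < κ := one_div_pos.mp (hε.trans hεκ)
  have := hQ.isHermitian.nonempty_of_condNum_pos hκ
  have hstep k := hQ.opNorm_one_sub_smul_one_add_mul_le hε.le (hΔ k)
  have hρ1 : ρ < 1 := sub_lt_self _ (by positivity)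
  have hρ0 : 0 < ρ := by
    refine sub_pos.mpr ((div_lt_one (by positivity)).mpr ?_)
    have : ε * κ < 1 := by rwa [lt_div_iff₀ hκ] at hεκ
    linarith
  have hdecay : ∀ k, ‖e k‖ ≤ ρ ^ k * ‖e 0‖ := fun k =>
    le_geom (u := fun k => ‖e k‖) hρ0.le k fun j _ => by
      rw [he j]
      exact (ContinuousLinearMap.le_opNorm _ _).trans
        (mul_le_mul_of_nonneg_right (hstep j) (norm_nonneg _))
  refine ⟨hρ0, hρ1, hdecay, ?_⟩
  rw [tendsto_zero_iff_norm_tendsto_zero]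
  refine squeeze_zero (fun k => norm_nonneg _) hdecay ?_
  simpa using (tendsto_pow_atTop_nhds_zero_of_lt_one hρ0.le hρ1).mul_const ‖e 0‖

/-- Robust stability under relative deterministic noise: sufficiency. -/
theorem stmt_14 {n : ℕ} (hn : 0 < n) (Q : Matrix (Fin n) (Fin n) ℝ)
    (hQ : Q.PosDef) (ε : ℝ) (hε : 0 < ε)
    (Δ : ℕ → Matrix (Fin n) (Fin n) ℝ)
    (hΔ : ∀ k, opNorm (Δ k) < 1 / condNum Q - ε)
    (e : ℕ → E n)
    (he : ∀ k, e (k + 1) =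
      Matrix.toEuclideanCLM (𝕜 := ℝ)
        ((1 : Matrix (Fin n) (Fin n) ℝ) -
          (2 / (lamMin Q + lamMax Q)) • ((1 + Δ k) * Q)) (e k)) :
    (let κ := condNum Q
     let ρ := 1 - ε * κ / (κ + 1)
     0 < ρ ∧ ρ < 1 ∧ (∀ k, ‖e k‖ ≤ ρ ^ k * ‖e 0‖) ∧
       Filter.Tendsto e Filter.atTop (nhds 0)) :=
  stmt_14_general Q hQ ε hε Δ hΔ e he

end
end
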